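/- Let Λ_o ⊂ ℝⁿ be generated by the diagonal matrix M = diag(a₁,…,aₙ) with aᵢ > 0, let k ≥ 1, and let Z be an upper triangular integer matrix with all diagonal entries 2^k that is not itself diagonal-generating the same lattice, i.e., MZℤⁿ ≠ 2^k Λ_o. Then the sublattice Λ generated by MZ satisfies ψ_Λ(x) < ψ_{2^k Λ_o}(x) for all x > 0. -/

import Mathlib

/-!
Write `B = diag(a) Z`, an upper triangular real matrix. Splitting `ω = (m, ω')`, the first
coordinate of `B ω` is `B₀₀ m + t(ω')` while the others depend on `ω'` only, so
`ψ_B = ∑_{ω'} (term of the lower-right block at ω') · ∑_m exp(-x (B₀₀ m + t(ω'))²)`.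
By Poisson summation the inner sum is a cosine series with positive coefficients, so it is
maximal exactly when the shift `t(ω')` is an integer multiple of `B₀₀`. Induction on the
dimension gives `ψ_B ≤ ψ_{diag(B₀₀, …, Bₙₙ)}`, strictly as soon as some `B i j` with `i < j`
is not an integer multiple of `B i i`; if there is no such entry, `B = diag(Bᵢᵢ) U` with `U`
unimodular and the two lattices coincide.
-/

open scoped BigOperators

def latticeSet {n : ℕ} (M : Matrix (Fin n) (Fin n) ℝ) : Set (Fin n → ℝ) :=
  {v | ∃ ω : Fin n → ℤ, v = M.mulVec (fun j => (ω j : ℝ))}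

/-- The psi function `ψ_Λ(x) = ∑_{t ∈ Λ} exp(−x‖t‖²)` of the lattice generated by `M`. -/
noncomputable def psi {n : ℕ} (M : Matrix (Fin n) (Fin n) ℝ) (x : ℝ) : ℝ :=
  ∑' ω : Fin n → ℤ, Real.exp (-x * ∑ i, (M.mulVec (fun j => (ω j : ℝ)) i) ^ 2)

open Real Matrix

section GaussianSums

variable {γ : ℝ}

lemma summable_exp_neg_mul_int_add_sq (hγ : 0 < γ) (d : ℝ) :
    Summable fun m : ℤ => rexp (-γ * (m + d) ^ 2) := by
  convert HurwitzKernelBounds.summable_f_int 0 d (div_pos hγ pi_pos) using 2 with m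
  rw [HurwitzKernelBounds.f_int, pow_zero, one_mul]
  field_simp

lemma summable_exp_neg_mul_int_sq (hγ : 0 < γ) :
    Summable fun m : ℤ => rexp (-γ * m ^ 2) := by
  simpa using summable_exp_neg_mul_int_add_sq hγ 0

lemma summable_exp_neg_mul_int_sq_mul_cos (hγ : 0 < γ) (θ : ℝ) :
    Summable fun n : ℤ => rexp (-γ * n ^ 2) * cos (θ * n) :=
  (summable_exp_neg_mul_int_sq hγ).of_norm_bounded fun n => by
    rw [norm_mul, norm_of_nonneg (exp_pos _).le, norm_eq_abs]
    exact mul_le_of_le_one_right (exp_pos _).le (abs_cos_le_one _)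

/-- The real part of Jacobi's transformation formula `Complex.tsum_exp_neg_quadratic`
at the purely imaginary linear coefficient `b = -i d`. -/
theorem tsum_exp_neg_div_mul_int_add_sq {a : ℝ} (ha : 0 < a) (d : ℝ) :
    ∑' m : ℤ, rexp (-π / a * (m + d) ^ 2) =
      a ^ (1 / 2 : ℝ) * ∑' n : ℤ, rexp (-(π * a) * n ^ 2) * cos (2 * π * d * n) := by
  have key := Complex.tsum_exp_neg_quadratic (a := a) (by simpa using ha) (-Complex.I * d)
  have hrhs : ∀ n : ℤ, Complex.exp (-π / a * (n + Complex.I * (-Complex.I * d)) ^ 2) =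
      (rexp (-π / a * (n + d) ^ 2) : ℂ) := by
    intro n
    rw [← mul_assoc, mul_neg, Complex.I_mul_I, neg_neg, one_mul]
    push_cast
    rfl
  have hlhs : ∀ n : ℤ, -π * a * n ^ 2 + 2 * π * (-Complex.I * d) * n =
      ((-(π * a) * n ^ 2 : ℝ) : ℂ) + ((-(2 * π * d * n) : ℝ) : ℂ) * Complex.I := by
    intro n
    push_cast
    ring
  have hsum : Summable fun n : ℤ =>
      Complex.exp (((-(π * a) * n ^ 2 : ℝ) : ℂ) + ((-(2 * π * d * n) : ℝ) : ℂ) * Complex.I) := by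
    refine .of_norm ?_
    convert summable_exp_neg_mul_int_sq (mul_pos pi_pos ha) using 2 with n
    simp only [Complex.norm_exp, Complex.add_re, Complex.ofReal_re, Complex.re_ofReal_mul,
      Complex.I_re, mul_zero, add_zero]
  have hpow : (a : ℂ) ^ (1 / 2 : ℂ) = ((a ^ (1 / 2 : ℝ) : ℝ) : ℂ) := by
    rw [Complex.ofReal_cpow ha.le]
    norm_num
  rw [tsum_congr hrhs, tsum_congr fun n => congrArg Complex.exp (hlhs n), ← Complex.ofReal_tsum,
    hpow, one_div, ← div_eq_inv_mul, eq_div_iff (by exact_mod_cast (rpow_pos_of_pos ha _).ne')]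
    at key
  have hre := congrArg Complex.re key
  rw [Complex.re_mul_ofReal, Complex.re_tsum hsum, Complex.ofReal_re] at hre
  simp only [Complex.exp_re, Complex.add_re, Complex.ofReal_re, Complex.re_ofReal_mul,
    Complex.I_re, mul_zero, add_zero, Complex.add_im, Complex.ofReal_im, Complex.im_ofReal_mul,
    Complex.I_im, mul_one, zero_add, cos_neg] at hre
  linarith

theorem tsum_exp_neg_mul_int_add_sq_le (hγ : 0 < γ) (d : ℝ) :
    ∑' m : ℤ, rexp (-γ * (m + d) ^ 2) ≤ ∑' m : ℤ, rexp (-γ * m ^ 2) := by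
  have ha : 0 < π / γ := div_pos pi_pos hγ
  have hγa : -γ = -π / (π / γ) := by field_simp
  have h0 := tsum_exp_neg_div_mul_int_add_sq ha 0
  simp only [add_zero, mul_zero, zero_mul, cos_zero, mul_one] at h0
  rw [hγa, tsum_exp_neg_div_mul_int_add_sq ha, h0]
  gcongr with n
  · exact summable_exp_neg_mul_int_sq_mul_cos (by positivity) _
  · exact summable_exp_neg_mul_int_sq (by positivity)
  · exact mul_le_of_le_one_right (exp_pos _).le (cos_le_one _)

theorem tsum_exp_neg_mul_int_add_sq_lt (hγ : 0 < γ) {d : ℝ} (hd : ∀ z : ℤ, d ≠ z) :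
    ∑' m : ℤ, rexp (-γ * (m + d) ^ 2) < ∑' m : ℤ, rexp (-γ * m ^ 2) := by
  have ha : 0 < π / γ := div_pos pi_pos hγ
  have hγa : -γ = -π / (π / γ) := by field_simp
  have h0 := tsum_exp_neg_div_mul_int_add_sq ha 0
  simp only [add_zero, mul_zero, zero_mul, cos_zero, mul_one] at h0
  rw [hγa, tsum_exp_neg_div_mul_int_add_sq ha, h0]
  have hcos : cos (2 * π * d * (1 : ℤ)) < 1 := by
    refine (cos_le_one _).lt_of_ne fun h => ?_
    obtain ⟨z, hz⟩ := (cos_eq_one_iff _).1 h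
    exact hd z (by push_cast at hz; nlinarith [pi_pos])
  gcongr
  refine Summable.tsum_lt_tsum (i := 1) (fun n => ?_) ?_
    (summable_exp_neg_mul_int_sq_mul_cos (by positivity) _)
    (summable_exp_neg_mul_int_sq (by positivity))
  · exact mul_le_of_le_one_right (exp_pos _).le (cos_le_one _)
  · exact mul_lt_of_lt_one_right (exp_pos _) hcos

end GaussianSums

section ScaledGaussianSums

variable {x β : ℝ}

lemma exp_neg_mul_mul_int_add_sq (hβ : β ≠ 0) (t : ℝ) (m : ℤ) :
    rexp (-x * (β * m + t) ^ 2) = rexp (-(x * β ^ 2) * (m + t / β) ^ 2) := by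
  congr 1
  field_simp

lemma exp_neg_mul_mul_int_sq (β : ℝ) (m : ℤ) :
    rexp (-x * (β * m) ^ 2) = rexp (-(x * β ^ 2) * m ^ 2) := by
  ring_nf

lemma summable_exp_neg_mul_mul_int_add_sq (hx : 0 < x) (hβ : β ≠ 0) (t : ℝ) :
    Summable fun m : ℤ => rexp (-x * (β * m + t) ^ 2) := by
  simp_rw [exp_neg_mul_mul_int_add_sq hβ]
  exact summable_exp_neg_mul_int_add_sq (by positivity) _

lemma tsum_exp_neg_mul_mul_int_add_sq_le (hx : 0 < x) (hβ : β ≠ 0) (t : ℝ) :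
    ∑' m : ℤ, rexp (-x * (β * m + t) ^ 2) ≤ ∑' m : ℤ, rexp (-x * (β * m) ^ 2) := by
  rw [tsum_congr (exp_neg_mul_mul_int_add_sq hβ t), tsum_congr (exp_neg_mul_mul_int_sq (x := x) β)]
  exact tsum_exp_neg_mul_int_add_sq_le (by positivity) _

lemma tsum_exp_neg_mul_mul_int_add_sq_lt (hx : 0 < x) (hβ : β ≠ 0) {t : ℝ}
    (ht : ∀ z : ℤ, t ≠ β * z) :
    ∑' m : ℤ, rexp (-x * (β * m + t) ^ 2) < ∑' m : ℤ, rexp (-x * (β * m) ^ 2) := by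
  rw [tsum_congr (exp_neg_mul_mul_int_add_sq hβ t), tsum_congr (exp_neg_mul_mul_int_sq (x := x) β)]
  refine tsum_exp_neg_mul_int_add_sq_lt (by positivity) fun z hz => ht z ?_
  rw [← hz]
  field_simp

lemma tsum_exp_neg_mul_mul_int_sq_pos (hx : 0 < x) (hβ : β ≠ 0) :
    0 < ∑' m : ℤ, rexp (-x * (β * m) ^ 2) := by
  simpa using (summable_exp_neg_mul_mul_int_add_sq hx hβ 0).tsum_pos (fun _ => (exp_pos _).le) 0
    (exp_pos _)

lemma Summable.mul_tsum_exp_neg_mul_mul_int_add_sq {ι : Type*} {f : ι → ℝ} (hf : Summable f)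
    (hf0 : 0 ≤ f) (hx : 0 < x) (hβ : β ≠ 0) (t : ι → ℝ) :
    Summable fun i => f i * ∑' m : ℤ, rexp (-x * (β * m + t i) ^ 2) :=
  (hf.mul_right (∑' m : ℤ, rexp (-x * (β * m) ^ 2))).of_nonneg_of_le
    (fun i => mul_nonneg (hf0 i) (tsum_nonneg fun _ => (exp_pos _).le))
    (fun i => mul_le_mul_of_nonneg_left (tsum_exp_neg_mul_mul_int_add_sq_le hx hβ _) (hf0 i))

end ScaledGaussianSums

noncomputable def psiSummand {n : ℕ} (M : Matrix (Fin n) (Fin n) ℝ) (x : ℝ) (ω : Fin n → ℤ) :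
    ℝ :=
  rexp (-x * ∑ i, (M *ᵥ fun j => (ω j : ℝ)) i ^ 2)

section Triangular

variable {n : ℕ} {x : ℝ}

lemma psi_eq_tsum_psiSummand (M : Matrix (Fin n) (Fin n) ℝ) (x : ℝ) :
    psi M x = ∑' ω, psiSummand M x ω := rfl

lemma psiSummand_pos (M : Matrix (Fin n) (Fin n) ℝ) (x : ℝ) (ω : Fin n → ℤ) :
    0 < psiSummand M x ω := exp_pos _

lemma psiSummand_cons {B : Matrix (Fin (n + 1)) (Fin (n + 1)) ℝ} (hB : B.IsUpperTriangular)
    (m : ℤ) (ω : Fin n → ℤ) :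
    psiSummand B x (Fin.cons m ω) =
      psiSummand (B.submatrix Fin.succ Fin.succ) x ω *
        rexp (-x * (B 0 0 * m + ∑ j, B 0 j.succ * ω j) ^ 2) := by
  have hsucc : ∀ i : Fin n, (B *ᵥ fun j => ((Fin.cons m ω : Fin (n + 1) → ℤ) j : ℝ)) i.succ =
      (B.submatrix Fin.succ Fin.succ *ᵥ fun j => (ω j : ℝ)) i := by
    intro i
    have h0 : B i.succ 0 = 0 := hB (Fin.succ_pos i)
    simp [mulVec, dotProduct, Fin.sum_univ_succ, h0]
  rw [psiSummand, psiSummand, ← exp_add, Fin.sum_univ_succ]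
  simp only [hsucc]
  simp only [mulVec, dotProduct, Fin.sum_univ_succ, Fin.cons_zero, Fin.cons_succ,
    submatrix_apply, neg_mul, exp_eq_exp]
  ring

lemma hasSum_psiSummand_succ {B : Matrix (Fin (n + 1)) (Fin (n + 1)) ℝ}
    (hB : B.IsUpperTriangular) (hx : 0 < x) (h0 : B 0 0 ≠ 0)
    (hs : Summable (psiSummand (B.submatrix Fin.succ Fin.succ) x)) :
    HasSum (psiSummand B x) (∑' ω, psiSummand (B.submatrix Fin.succ Fin.succ) x ω *
      ∑' m : ℤ, rexp (-x * (B 0 0 * m + ∑ j, B 0 j.succ * ω j) ^ 2)) := by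
  set B' := B.submatrix Fin.succ Fin.succ
  set t : (Fin n → ℤ) → ℝ := fun ω => ∑ j, B 0 j.succ * ω j
  let e : (Fin n → ℤ) × ℤ ≃ (Fin (n + 1) → ℤ) :=
    (Equiv.prodComm _ _).trans (Fin.consEquiv fun _ => ℤ)
  have he : psiSummand B x ∘ e =
      fun p => psiSummand B' x p.1 * rexp (-x * (B 0 0 * p.2 + t p.1) ^ 2) :=
    funext fun p => psiSummand_cons hB p.2 p.1
  have hfiber : ∀ ω, HasSum (fun m : ℤ => psiSummand B' x ω * rexp (-x * (B 0 0 * m + t ω) ^ 2))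
      (psiSummand B' x ω * ∑' m : ℤ, rexp (-x * (B 0 0 * m + t ω) ^ 2)) := fun ω =>
    ((summable_exp_neg_mul_mul_int_add_sq hx h0 (t ω)).hasSum).mul_left _
  have hsum : Summable (psiSummand B x ∘ e) := by
    rw [he, summable_prod_of_nonneg fun p => (mul_pos (psiSummand_pos _ _ _) (exp_pos _)).le]
    refine ⟨fun ω => (hfiber ω).summable, ?_⟩
    simp_rw [fun ω => (hfiber ω).tsum_eq]
    exact hs.mul_tsum_exp_neg_mul_mul_int_add_sq (fun _ => (psiSummand_pos _ _ _).le) hx h0 t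
  rw [← e.hasSum_iff]
  convert hsum.hasSum using 1
  rw [he] at hsum ⊢
  rw [hsum.tsum_prod' fun ω => (hfiber ω).summable]
  exact tsum_congr fun ω => (hfiber ω).tsum_eq.symm

lemma Matrix.IsUpperTriangular.submatrix_succ {B : Matrix (Fin (n + 1)) (Fin (n + 1)) ℝ}
    (hB : B.IsUpperTriangular) : (B.submatrix Fin.succ Fin.succ).IsUpperTriangular :=
  fun _ _ h => hB (Fin.succ_lt_succ_iff.2 h)

theorem summable_psiSummand {B : Matrix (Fin n) (Fin n) ℝ} (hB : B.IsUpperTriangular)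
    (hdiag : ∀ i, B i i ≠ 0) (hx : 0 < x) : Summable (psiSummand B x) := by
  induction n with
  | zero => exact .of_finite
  | succ n ih =>
    exact (hasSum_psiSummand_succ hB hx (hdiag 0)
      (ih (IsUpperTriangular.submatrix_succ hB) fun i => hdiag i.succ)).summable

lemma psi_eq_tsum_succ {B : Matrix (Fin (n + 1)) (Fin (n + 1)) ℝ} (hB : B.IsUpperTriangular)
    (hdiag : ∀ i, B i i ≠ 0) (hx : 0 < x) :
    psi B x = ∑' ω, psiSummand (B.submatrix Fin.succ Fin.succ) x ω *
      ∑' m : ℤ, rexp (-x * (B 0 0 * m + ∑ j, B 0 j.succ * ω j) ^ 2) :=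
  (hasSum_psiSummand_succ hB hx (hdiag 0)
    (summable_psiSummand (IsUpperTriangular.submatrix_succ hB) (fun i => hdiag i.succ) hx)).tsum_eq

theorem psi_diagonal_succ {d : Fin (n + 1) → ℝ} (hd : ∀ i, d i ≠ 0) (hx : 0 < x) :
    psi (diagonal d) x = psi (diagonal (d ∘ Fin.succ)) x * ∑' m : ℤ, rexp (-x * (d 0 * m) ^ 2) := by
  rw [psi_eq_tsum_succ (blockTriangular_diagonal d) (by simpa using hd) hx,
    psi_eq_tsum_psiSummand, ← tsum_mul_right, submatrix_diagonal _ _ (Fin.succ_injective n)]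
  simp [diagonal_apply_ne _ (Fin.succ_ne_zero _).symm]

lemma psi_le_psi_submatrix_succ_mul {B : Matrix (Fin (n + 1)) (Fin (n + 1)) ℝ}
    (hB : B.IsUpperTriangular) (hdiag : ∀ i, B i i ≠ 0) (hx : 0 < x) :
    psi B x ≤ psi (B.submatrix Fin.succ Fin.succ) x * ∑' m : ℤ, rexp (-x * (B 0 0 * m) ^ 2) := by
  have hs := summable_psiSummand (IsUpperTriangular.submatrix_succ hB) (fun i => hdiag i.succ) hx
  rw [psi_eq_tsum_succ hB hdiag hx, psi_eq_tsum_psiSummand, ← tsum_mul_right]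
  exact (hs.mul_tsum_exp_neg_mul_mul_int_add_sq (fun _ => (psiSummand_pos _ _ _).le) hx (hdiag 0)
    _).tsum_le_tsum (fun ω => mul_le_mul_of_nonneg_left
      (tsum_exp_neg_mul_mul_int_add_sq_le hx (hdiag 0) _) (psiSummand_pos _ _ _).le)
    (hs.mul_right _)

lemma psi_lt_psi_submatrix_succ_mul {B : Matrix (Fin (n + 1)) (Fin (n + 1)) ℝ}
    (hB : B.IsUpperTriangular) (hdiag : ∀ i, B i i ≠ 0) (hx : 0 < x) {j : Fin n}
    (hj : ∀ z : ℤ, B 0 j.succ ≠ B 0 0 * z) :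
    psi B x < psi (B.submatrix Fin.succ Fin.succ) x * ∑' m : ℤ, rexp (-x * (B 0 0 * m) ^ 2) := by
  have hs := summable_psiSummand (IsUpperTriangular.submatrix_succ hB) (fun i => hdiag i.succ) hx
  rw [psi_eq_tsum_succ hB hdiag hx, psi_eq_tsum_psiSummand, ← tsum_mul_right]
  refine Summable.tsum_lt_tsum (i := Pi.single j 1) (fun ω => mul_le_mul_of_nonneg_left
      (tsum_exp_neg_mul_mul_int_add_sq_le hx (hdiag 0) _) (psiSummand_pos _ _ _).le) ?_
    (hs.mul_tsum_exp_neg_mul_mul_int_add_sq (fun _ => (psiSummand_pos _ _ _).le) hx (hdiag 0) _)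
    (hs.mul_right _)
  refine mul_lt_mul_of_pos_left (tsum_exp_neg_mul_mul_int_add_sq_lt hx (hdiag 0) ?_)
    (psiSummand_pos _ _ _)
  simpa [Pi.single_apply] using hj

theorem psi_le_psi_diagonal {B : Matrix (Fin n) (Fin n) ℝ} (hB : B.IsUpperTriangular)
    (hdiag : ∀ i, B i i ≠ 0) (hx : 0 < x) : psi B x ≤ psi (diagonal fun i => B i i) x := by
  induction n with
  | zero => exact le_of_eq (by simp [psi])
  | succ n ih =>
    calc psi B x
        ≤ psi (B.submatrix Fin.succ Fin.succ) x * ∑' m : ℤ, rexp (-x * (B 0 0 * m) ^ 2) :=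
          psi_le_psi_submatrix_succ_mul hB hdiag hx
      _ ≤ psi (diagonal fun i => B i.succ i.succ) x * ∑' m : ℤ, rexp (-x * (B 0 0 * m) ^ 2) :=
          mul_le_mul_of_nonneg_right (ih (IsUpperTriangular.submatrix_succ hB)
            fun i => hdiag i.succ) (tsum_nonneg fun _ => (exp_pos _).le)
      _ = psi (diagonal fun i => B i i) x := (psi_diagonal_succ hdiag hx).symm

theorem psi_lt_psi_diagonal {B : Matrix (Fin n) (Fin n) ℝ} (hB : B.IsUpperTriangular)
    (hdiag : ∀ i, B i i ≠ 0) (hx : 0 < x) (hskew : ∃ i j, i < j ∧ ∀ z : ℤ, B i j ≠ B i i * z) :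
    psi B x < psi (diagonal fun i => B i i) x := by
  induction n with
  | zero => obtain ⟨i, -⟩ := hskew; exact i.elim0
  | succ n ih =>
    obtain ⟨i, j, hij, hz⟩ := hskew
    obtain ⟨j, rfl⟩ := Fin.eq_succ_of_ne_zero (Fin.pos_iff_ne_zero.1 (i.zero_le.trans_lt hij))
    have hB' := IsUpperTriangular.submatrix_succ hB
    have hθ := tsum_exp_neg_mul_mul_int_sq_pos hx (hdiag 0)
    rw [psi_diagonal_succ hdiag hx]
    rcases Fin.eq_zero_or_eq_succ i with rfl | ⟨i, rfl⟩
    · exact (psi_lt_psi_submatrix_succ_mul hB hdiag hx hz).trans_le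
        (mul_le_mul_of_nonneg_right (psi_le_psi_diagonal hB' (fun i => hdiag i.succ) hx) hθ.le)
    · exact (psi_le_psi_submatrix_succ_mul hB hdiag hx).trans_lt (mul_lt_mul_of_pos_right
        (ih hB' (fun i => hdiag i.succ) ⟨i, j, Fin.succ_lt_succ_iff.1 hij, hz⟩) hθ)

end Triangular

section Lattice

variable {n : ℕ}

lemma latticeSet_mul_map_intCast (M : Matrix (Fin n) (Fin n) ℝ) {U : Matrix (Fin n) (Fin n) ℤ}
    (hU : IsUnit U.det) : latticeSet (M * U.map (Int.cast : ℤ → ℝ)) = latticeSet M := by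
  have hcast : ∀ ω : Fin n → ℤ,
      U.map (Int.cast : ℤ → ℝ) *ᵥ (fun j => (ω j : ℝ)) = fun i => ((U *ᵥ ω) i : ℝ) :=
    fun ω => funext fun i => (RingHom.map_mulVec (Int.castRingHom ℝ) U ω i).symm
  ext v
  constructor
  · rintro ⟨ω, rfl⟩
    exact ⟨U *ᵥ ω, by rw [← mulVec_mulVec, hcast]⟩
  · rintro ⟨ω, rfl⟩
    refine ⟨U⁻¹ *ᵥ ω, ?_⟩
    rw [← mulVec_mulVec, hcast, mulVec_mulVec, mul_nonsing_inv _ hU, one_mulVec]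

lemma latticeSet_eq_latticeSet_diagonal {B : Matrix (Fin n) (Fin n) ℝ} (hB : B.IsUpperTriangular)
    (h : ∀ i j, i < j → ∃ z : ℤ, B i j = B i i * z) :
    latticeSet B = latticeSet (diagonal fun i => B i i) := by
  choose z hz using h
  let U : Matrix (Fin n) (Fin n) ℤ :=
    of fun i j => if h : i < j then z i j h else if i = j then 1 else 0
  have hU : U.IsUpperTriangular := fun i j (hji : j < i) => by simp [U, hji.not_gt, hji.ne']
  have hdet : U.det = 1 := by
    rw [det_of_isUpperTriangular hU]
    exact Finset.prod_eq_one fun i _ => by simp [U]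
  have hBU : B = diagonal (fun i => B i i) * U.map (Int.cast : ℤ → ℝ) := by
    ext i j
    rw [diagonal_mul, map_apply]
    rcases lt_trichotomy i j with hij | rfl | hji
    · simp [U, hij, hz]
    · simp [U]
    · simp [U, hji.not_gt, hji.ne', hB hji]
  calc latticeSet B = latticeSet (diagonal (fun i => B i i) * U.map (Int.cast : ℤ → ℝ)) :=
        congrArg latticeSet hBU
    _ = latticeSet (diagonal fun i => B i i) :=
        latticeSet_mul_map_intCast _ (by rw [hdet]; exact isUnit_one)

end Lattice

theorem psi_skewed_sublattice_lt_general {n : ℕ} (a : Fin n → ℝ) (ha : ∀ i, 0 < a i)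
    (k : ℕ) (Z : Matrix (Fin n) (Fin n) ℤ)
    (htri : Z.BlockTriangular (id : Fin n → Fin n))
    (hdiag : ∀ i, Z i i = 2 ^ k)
    (hne : latticeSet (Matrix.diagonal a * Z.map (Int.cast : ℤ → ℝ)) ≠
      latticeSet (Matrix.diagonal fun i => (2 : ℝ) ^ k * a i))
    (x : ℝ) (hx : 0 < x) :
    psi (Matrix.diagonal a * Z.map (Int.cast : ℤ → ℝ)) x <
      psi (Matrix.diagonal fun i => (2 : ℝ) ^ k * a i) x := by
  set B := Matrix.diagonal a * Z.map (Int.cast : ℤ → ℝ)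
  have hB : B.IsUpperTriangular := fun i j (hji : j < i) => by simp [B, htri hji]
  have hBdiag : (fun i => B i i) = fun i => (2 : ℝ) ^ k * a i := by
    ext i
    simp [B, hdiag, mul_comm]
  rw [← hBdiag] at hne ⊢
  refine psi_lt_psi_diagonal hB (fun i => ?_) hx ?_
  · rw [congrFun hBdiag i]
    exact mul_ne_zero (by positivity) (ha i).ne'
  · by_contra! h
    exact hne (latticeSet_eq_latticeSet_diagonal hB h)

/-- A skewed sublattice, generated by `M Z` with `Z` an upper triangular integer matrix
with diagonal entries `2^k`, has a strictly smaller psi function than the orthogonal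
sublattice `2^k Λ_o`, provided the two lattices differ. -/
theorem psi_skewed_sublattice_lt {n : ℕ} (a : Fin n → ℝ) (ha : ∀ i, 0 < a i)
    (k : ℕ) (hk : 1 ≤ k) (Z : Matrix (Fin n) (Fin n) ℤ)
    (htri : Z.BlockTriangular (id : Fin n → Fin n))
    (hdiag : ∀ i, Z i i = 2 ^ k)
    (hne : latticeSet (Matrix.diagonal a * Z.map (Int.cast : ℤ → ℝ)) ≠
      latticeSet (Matrix.diagonal fun i => (2 : ℝ) ^ k * a i))
    (x : ℝ) (hx : 0 < x) :
    psi (Matrix.diagonal a * Z.map (Int.cast : ℤ → ℝ)) x <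
      psi (Matrix.diagonal fun i => (2 : ℝ) ^ k * a i) x :=
  psi_skewed_sublattice_lt_general a ha k Z htri hdiag hne x hx
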